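/- For every t ∈ ℤ and every integer k ≥ 1, the Hessenbergian ξ_{t,k} satisfies the backward recursion ξ_{t,k} = Σ_{m=1}^{min(p,k)} φ_m(t) ξ_{t−m, k−m}. -/

import Mathlib

/-!
Expand `det Φ_{t,k}` along its last row. Deleting the last row and column `j` of a lower
Hessenberg matrix with `-1` on the superdiagonal leaves a block lower triangular matrix: the leading
`j × j` principal submatrix, and a lower triangular block with `-1` on its diagonal, whose sign
cancels the cofactor sign. The leading `j × j` principal submatrix of `Φ_{t,k}` is `Φ_{t-(k-j),j}`,
and the last-row entry in column `j` is `φ_{k-j}(t)`.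
-/

open Finset

/-- The `k × k` solution matrix `Φ_{t,k}`: its (1-based) `(i,j)` entry is `-1` if `i = j-1`,
`φ_{1+i−j}(t−k+i)` if `0 ≤ i−j ≤ p−1`, and `0` otherwise. -/
noncomputable def PhiMat (p : ℕ) (φ : ℕ → ℤ → ℝ) (t : ℤ) (k : ℕ) :
    Matrix (Fin k) (Fin k) ℝ :=
  fun i j =>
    if (i : ℕ) + 1 = (j : ℕ) then -1
    else if (j : ℕ) ≤ (i : ℕ) ∧ (i : ℕ) - (j : ℕ) + 1 ≤ p then
      φ ((i : ℕ) - (j : ℕ) + 1) (t - (k : ℤ) + (i : ℕ) + 1)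
    else 0

/-- The Hessenbergian (Green function) `ξ_{t,k} = det Φ_{t,k}`, with the conventions
`ξ_{t,0} = 1` (empty determinant) and `ξ_{t,k} = 0` for `k < 0`. -/
noncomputable def xi (p : ℕ) (φ : ℕ → ℤ → ℝ) (t : ℤ) (k : ℤ) : ℝ :=
  if 0 ≤ k then (PhiMat p φ t k.toNat).det else 0

theorem Fin.val_succAbove {n : ℕ} (j : Fin (n + 1)) (c : Fin n) :
    (j.succAbove c : ℕ) = if (c : ℕ) < j then (c : ℕ) else c + 1 := by
  split_ifs with h
  · rw [Fin.succAbove_of_castSucc_lt _ _ h]; rfl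
  · rw [Fin.succAbove_of_le_castSucc _ _ (by simpa [Fin.le_def] using h)]; rfl

namespace Matrix

variable {R : Type*} [CommRing R] {n : ℕ}

theorem det_submatrix_last_succAbove_of_hessenberg (A : Matrix (Fin (n + 1)) (Fin (n + 1)) R)
    (h_zero : ∀ i j : Fin (n + 1), (i : ℕ) + 1 < j → A i j = 0)
    (h_super : ∀ i j : Fin (n + 1), (i : ℕ) + 1 = j → A i j = -1) (j : Fin (n + 1)) :
    (A.submatrix (Fin.last n).succAbove j.succAbove).det =
      (-1) ^ (n - j) * (A.submatrix (Fin.castLE j.isLt.le) (Fin.castLE j.isLt.le)).det := by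
  let e : Fin j ⊕ Fin (n - j) ≃ Fin n := finSumFinEquiv.trans (finCongr (by omega))
  have he_inl (r : Fin j) : (e (.inl r) : ℕ) = r := rfl
  have he_inr (r : Fin (n - j)) : (e (.inr r) : ℕ) = j + r := rfl
  have h_col_inl (s : Fin j) : (j.succAbove (e (.inl s)) : ℕ) = s := by
    simp [Fin.val_succAbove, he_inl]
  have h_col_inr (s : Fin (n - j)) : (j.succAbove (e (.inr s)) : ℕ) = j + s + 1 := by
    simp [Fin.val_succAbove, he_inr]
  rw [Fin.succAbove_last, ← det_submatrix_equiv_self e]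
  set M := (A.submatrix Fin.castSucc j.succAbove).submatrix e e
  have h₁₁ : M.toBlocks₁₁ = A.submatrix (Fin.castLE j.isLt.le) (Fin.castLE j.isLt.le) := by
    ext r s
    simp only [toBlocks₁₁, of_apply, M, submatrix_apply]
    congr 2
    exact Fin.ext (h_col_inl s)
  have h₁₂ : M.toBlocks₁₂ = 0 := by
    ext r s
    refine h_zero _ _ ?_
    rw [Fin.val_castSucc, he_inl, h_col_inr]
    omega
  have h₂₂ : M.toBlocks₂₂.IsLowerTriangular := by
    intro r s (hrs : r < s)
    refine h_zero _ _ ?_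
    rw [Fin.val_castSucc, he_inr, h_col_inr]
    omega
  have h_diag (r) : M.toBlocks₂₂ r r = -1 :=
    h_super _ _ (by rw [Fin.val_castSucc, he_inr, h_col_inr])
  rw [← fromBlocks_toBlocks M, h₁₂, det_fromBlocks_zero₁₂, h₁₁,
    det_of_isLowerTriangular _ h₂₂, mul_comm]
  simp [h_diag]

theorem det_eq_sum_last_row_mul_det_leading_of_hessenberg
    (A : Matrix (Fin (n + 1)) (Fin (n + 1)) R)
    (h_zero : ∀ i j : Fin (n + 1), (i : ℕ) + 1 < j → A i j = 0)
    (h_super : ∀ i j : Fin (n + 1), (i : ℕ) + 1 = j → A i j = -1) :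
    A.det = ∑ j : Fin (n + 1),
      A (Fin.last n) j * (A.submatrix (Fin.castLE j.isLt.le) (Fin.castLE j.isLt.le)).det := by
  rw [det_succ_row A (Fin.last n)]
  refine Finset.sum_congr rfl fun j _ => ?_
  have h_sign : (-1 : R) ^ (n + j : ℕ) * (-1) ^ (n - j) = 1 := by
    rw [← pow_add, show n + j + (n - j) = 2 * n by omega, pow_mul]
    simp
  rw [det_submatrix_last_succAbove_of_hessenberg A h_zero h_super, Fin.val_last]
  linear_combination
    A (Fin.last n) j * (A.submatrix (Fin.castLE j.isLt.le) (Fin.castLE j.isLt.le)).det * h_sign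

end Matrix

section PhiMat

variable (p : ℕ) (φ : ℕ → ℤ → ℝ) (t : ℤ)

theorem PhiMat_apply_of_succ_lt {k : ℕ} {i j : Fin k} (h : (i : ℕ) + 1 < j) :
    PhiMat p φ t k i j = 0 := by
  rw [PhiMat, if_neg (by omega), if_neg (by omega)]

theorem PhiMat_apply_of_succ_eq {k : ℕ} {i j : Fin k} (h : (i : ℕ) + 1 = j) :
    PhiMat p φ t k i j = -1 :=
  if_pos h

theorem PhiMat_last_apply (n : ℕ) (j : Fin (n + 1)) :
    PhiMat p φ t (n + 1) (Fin.last n) j = if n + 1 - j ≤ p then φ (n + 1 - j) t else 0 := by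
  have hj : (j : ℕ) ≤ n := Fin.is_le j
  rw [PhiMat, Fin.val_last, if_neg (by omega), show n - j + 1 = n + 1 - j by omega]
  simp only [hj, true_and]
  congr 2
  push_cast
  ring

theorem PhiMat_submatrix_castLE {j k : ℕ} (h : j ≤ k) :
    (PhiMat p φ t k).submatrix (Fin.castLE h) (Fin.castLE h) = PhiMat p φ (t - (k - j : ℕ)) j := by
  ext r s
  simp only [Matrix.submatrix_apply, PhiMat, Fin.val_castLE, Nat.cast_sub h]
  congr 3
  ring

theorem det_PhiMat_succ (n : ℕ) :
    (PhiMat p φ t (n + 1)).det =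
      ∑ m ∈ Icc 1 (min p (n + 1)), φ m t * (PhiMat p φ (t - m) (n + 1 - m)).det := by
  set f : ℕ → ℝ := fun m ↦ (if m ≤ p then φ m t else 0) * (PhiMat p φ (t - m) (n + 1 - m)).det
  have h_term (j : Fin (n + 1)) : PhiMat p φ t (n + 1) (Fin.last n) j *
      ((PhiMat p φ t (n + 1)).submatrix (Fin.castLE j.isLt.le) (Fin.castLE j.isLt.le)).det =
        f (n + 1 - j) := by
    rw [PhiMat_last_apply, PhiMat_submatrix_castLE]
    simp only [f]
    rw [show n + 1 - (n + 1 - (j : ℕ)) = j by omega]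
  have h_filter : (Icc 1 (n + 1)).filter (· ≤ p) = Icc 1 (min p (n + 1)) := by
    ext m
    simp only [mem_filter, mem_Icc]
    omega
  calc (PhiMat p φ t (n + 1)).det = ∑ j : Fin (n + 1), f (n + 1 - j) := by
        rw [Matrix.det_eq_sum_last_row_mul_det_leading_of_hessenberg _
          (fun _ _ ↦ PhiMat_apply_of_succ_lt p φ t) (fun _ _ ↦ PhiMat_apply_of_succ_eq p φ t)]
        exact sum_congr rfl fun j _ ↦ h_term j
    _ = ∑ m ∈ Icc 1 (n + 1), f m := by
        refine sum_bij' (fun j _ ↦ n + 1 - j)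
          (fun m hm ↦ ⟨n + 1 - m, by simp only [mem_Icc] at hm; omega⟩)
          (fun j _ ↦ ?_) (fun _ _ ↦ mem_univ _) (fun j _ ↦ ?_) (fun m hm ↦ ?_) (fun _ _ ↦ rfl)
        · simp only [mem_Icc]
          omega
        · ext
          simp only
          omega
        · simp only [mem_Icc] at hm
          simp only
          omega
    _ = ∑ m ∈ Icc 1 (min p (n + 1)), φ m t * (PhiMat p φ (t - m) (n + 1 - m)).det := by
        simp only [f, ite_mul, zero_mul, ← sum_filter, h_filter]

theorem xi_natCast (k : ℕ) : xi p φ t k = (PhiMat p φ t k).det := by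
  simp [xi]

end PhiMat

theorem xi_backward_recursion_general
    (p : ℕ) (φ : ℕ → ℤ → ℝ) (t : ℤ) (k : ℕ) (hk : 1 ≤ k) :
    xi p φ t k
      = ∑ m ∈ Finset.Icc 1 (min p k), φ m t * xi p φ (t - m) ((k : ℤ) - m) := by
  obtain ⟨n, rfl⟩ : ∃ n, k = n + 1 := ⟨k - 1, by omega⟩
  rw [xi_natCast, det_PhiMat_succ]
  refine sum_congr rfl fun m hm ↦ ?_
  have hmk : m ≤ n + 1 := (mem_Icc.mp hm).2.trans (min_le_right _ _)
  rw [← Nat.cast_sub hmk, xi_natCast]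

/-- Backward recursion for the Hessenbergian:
`ξ_{t,k} = Σ_{m=1}^{min(p,k)} φ_m(t) ξ_{t−m, k−m}`. -/
theorem xi_backward_recursion
    (p : ℕ) (hp : 1 ≤ p) (φ : ℕ → ℤ → ℝ) (t : ℤ) (k : ℕ) (hk : 1 ≤ k) :
    xi p φ t k
      = ∑ m ∈ Finset.Icc 1 (min p k), φ m t * xi p φ (t - m) ((k : ℤ) - m) :=
  xi_backward_recursion_general p φ t k hk
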